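/- arXiv:1807.06054 — 4 statements merged into one kernel-verified Lean document; each statement's English description precedes it below -/
import Mathlib

section
/- The Chernoff distance is bounded above by the Resistor distance: C(p,q) ≤ R(p,q), where R(p,q) = D(p‖q)·D(q‖p)/(D(p‖q)+D(q‖p)), assuming p ≠ q. -/
open Real Finset

/-- Jensen: exp of weighted sum of logs ≤ weighted sum. -/
lemma jensen_exp_log {α : Type*} [Fintype α] (w f : α → ℝ)
    (hw : ∀ x, 0 ≤ w x) (hws : ∑ x, w x = 1) (hf : ∀ x, 0 < f x) :
    Real.exp (∑ x, w x * Real.log (f x)) ≤ ∑ x, w x * f x := by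
  have h := convexOn_exp.map_sum_le (t := Finset.univ) (w := w) (p := fun x => Real.log (f x))
    (fun i _ => hw i) hws (fun i _ => Set.mem_univ _)
  simpa [smul_eq_mul, Real.exp_log (hf _)] using h

/-- Gibbs: KL divergence is positive when distributions differ. -/
lemma kl_pos {α : Type*} [Fintype α] (p q : α → ℝ)
    (hp : ∀ x, 0 < p x) (hq : ∀ x, 0 < q x)
    (hps : ∑ x, p x = 1) (hqs : ∑ x, q x = 1) (hpq : p ≠ q) :
    0 < ∑ x, p x * Real.log (p x / q x) := by
  obtain ⟨x0, hx0⟩ := Function.ne_iff.mp hpq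
  have key : ∑ x, p x * Real.log (q x / p x) < ∑ x, (q x - p x) := by
    refine Finset.sum_lt_sum (fun i _ => ?_) ⟨x0, Finset.mem_univ x0, ?_⟩
    · have h := Real.log_le_sub_one_of_pos (div_pos (hq i) (hp i))
      have h2 := mul_le_mul_of_nonneg_left h (hp i).le
      calc p i * Real.log (q i / p i) ≤ p i * (q i / p i - 1) := h2
        _ = q i - p i := by
          rw [mul_comm, sub_mul, div_mul_cancel₀ _ (hp i).ne', one_mul]
    · have hne : q x0 / p x0 ≠ 1 := by
        intro h; exact hx0 ((div_eq_one_iff_eq (hp x0).ne').mp h).symm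
      have h := Real.log_lt_sub_one_of_pos (div_pos (hq x0) (hp x0)) hne
      have h2 := mul_lt_mul_of_pos_left h (hp x0)
      calc p x0 * Real.log (q x0 / p x0) < p x0 * (q x0 / p x0 - 1) := h2
        _ = q x0 - p x0 := by
          rw [mul_comm, sub_mul, div_mul_cancel₀ _ (hp x0).ne', one_mul]
  have hz : ∑ x, (q x - p x) = 0 := by rw [Finset.sum_sub_distrib, hps, hqs]; ring
  have hneg : ∑ x, p x * Real.log (q x / p x) < 0 := by linarith
  have heq : ∑ x, p x * Real.log (p x / q x) = -∑ x, p x * Real.log (q x / p x) := by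
    rw [← Finset.sum_neg_distrib]
    refine Finset.sum_congr rfl fun i _ => ?_
    rw [Real.log_div (hp i).ne' (hq i).ne', Real.log_div (hq i).ne' (hp i).ne']
    ring
  rw [heq]; linarith

theorem chernoff_le_resistor
    {α : Type*} [Fintype α] (p q : α → ℝ)
    (hp : ∀ x, 0 < p x) (hq : ∀ x, 0 < q x)
    (hps : ∑ x, p x = 1) (hqs : ∑ x, q x = 1) (hpq : p ≠ q) :
    sSup {y : ℝ | ∃ t ∈ Set.Icc (0 : ℝ) 1,
        y = -Real.log (∑ x, p x ^ t * q x ^ (1 - t))} ≤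
      (∑ x, p x * Real.log (p x / q x)) * (∑ x, q x * Real.log (q x / p x)) /
        ((∑ x, p x * Real.log (p x / q x)) + (∑ x, q x * Real.log (q x / p x))) := by
  have hnα : Nonempty α := by
    rcases isEmpty_or_nonempty α with h | h
    · simp at hps
    · exact h
  set A := ∑ x, p x * Real.log (p x / q x) with hA
  set B := ∑ x, q x * Real.log (q x / p x) with hB
  have hApos : 0 < A := kl_pos p q hp hq hps hqs hpq
  have hBpos : 0 < B := kl_pos q p hq hp hqs hps (Ne.symm hpq)
  have hABpos : 0 < A + B := by linarith
  have hRnn : 0 ≤ A * B / (A + B) := by positivity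
  apply Real.sSup_le _ hRnn
  rintro y ⟨t, ⟨ht0, ht1⟩, rfl⟩
  set Z := ∑ x, p x ^ t * q x ^ (1 - t) with hZ
  have hZpos : 0 < Z := by
    refine Finset.sum_pos (fun i _ => ?_) Finset.univ_nonempty
    exact mul_pos (Real.rpow_pos_of_pos (hp i) t) (Real.rpow_pos_of_pos (hq i) (1 - t))
  -- bound 1 : -log Z ≤ (1-t) * A
  have hb1 : -Real.log Z ≤ (1 - t) * A := by
    have hrw : ∀ x, p x ^ t * q x ^ (1 - t) = p x * ((q x / p x) ^ (1 - t)) := by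
      intro x
      have h1 : p x ^ t = p x ^ (1 : ℝ) / p x ^ (1 - t) := by
        rw [← Real.rpow_sub (hp x)]; norm_num
      rw [Real.div_rpow (hq x).le (hp x).le, h1, Real.rpow_one,
        div_mul_eq_mul_div, mul_div_assoc]
    have hj := jensen_exp_log p (fun x => (q x / p x) ^ (1 - t)) (fun x => (hp x).le) hps
      (fun x => Real.rpow_pos_of_pos (div_pos (hq x) (hp x)) _)
    have hZeq : Z = ∑ x, p x * ((q x / p x) ^ (1 - t)) :=
      Finset.sum_congr rfl fun i _ => hrw i
    rw [← hZeq] at hj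
    have hlog : (∑ x, p x * Real.log ((q x / p x) ^ (1 - t))) ≤ Real.log Z :=
      (Real.le_log_iff_exp_le hZpos).mpr hj
    have heq : (∑ x, p x * Real.log ((q x / p x) ^ (1 - t))) = -((1 - t) * A) := by
      have hterm : ∀ x, p x * Real.log ((q x / p x) ^ (1 - t)) =
          -((1 - t) * (p x * Real.log (p x / q x))) := by
        intro x
        rw [Real.log_rpow (div_pos (hq x) (hp x)), Real.log_div (hq x).ne' (hp x).ne',
          Real.log_div (hp x).ne' (hq x).ne']
        ring
      simp only [hterm]
      rw [Finset.sum_neg_distrib, hA, Finset.mul_sum]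
    rw [heq] at hlog; linarith
  -- bound 2 : -log Z ≤ t * B
  have hb2 : -Real.log Z ≤ t * B := by
    have hrw : ∀ x, p x ^ t * q x ^ (1 - t) = q x * ((p x / q x) ^ t) := by
      intro x
      have h1 : q x ^ (1 - t) = q x ^ (1 : ℝ) / q x ^ t := by
        rw [← Real.rpow_sub (hq x)]
      rw [Real.div_rpow (hp x).le (hq x).le, h1, Real.rpow_one]
      field_simp
    have hj := jensen_exp_log q (fun x => (p x / q x) ^ t) (fun x => (hq x).le) hqs
      (fun x => Real.rpow_pos_of_pos (div_pos (hp x) (hq x)) _)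
    have hZeq : Z = ∑ x, q x * ((p x / q x) ^ t) :=
      Finset.sum_congr rfl fun i _ => hrw i
    rw [← hZeq] at hj
    have hlog : (∑ x, q x * Real.log ((p x / q x) ^ t)) ≤ Real.log Z :=
      (Real.le_log_iff_exp_le hZpos).mpr hj
    have heq : (∑ x, q x * Real.log ((p x / q x) ^ t)) = -(t * B) := by
      have hterm : ∀ x, q x * Real.log ((p x / q x) ^ t) =
          -(t * (q x * Real.log (q x / p x))) := by
        intro x
        rw [Real.log_rpow (div_pos (hp x) (hq x)), Real.log_div (hp x).ne' (hq x).ne',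
          Real.log_div (hq x).ne' (hp x).ne']
        ring
      simp only [hterm]
      rw [Finset.sum_neg_distrib, hB, Finset.mul_sum]
    rw [heq] at hlog; linarith
  -- combine
  rcases le_or_gt t (A / (A + B)) with h | h
  · calc -Real.log Z ≤ t * B := hb2
      _ ≤ (A / (A + B)) * B := mul_le_mul_of_nonneg_right h hBpos.le
      _ = A * B / (A + B) := by ring
  · have h1 : 1 - t ≤ B / (A + B) := by
      have hsum : A / (A + B) + B / (A + B) = 1 := by field_simp
      linarith
    calc -Real.log Z ≤ (1 - t) * A := hb1
      _ ≤ (B / (A + B)) * A := mul_le_mul_of_nonneg_right h1 hApos.le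
      _ = A * B / (A + B) := by ring
end

section
/- The Bhattacharyya distance lower-bounds the Resistor distance via Chernoff: B(p,q) ≤ C(p,q) ≤ R(p,q), hence B(p,q) ≤ R(p,q). -/
/-!
Jensen's inequality for the concave logarithm, with weights `p` at the points `√(q/p)`, gives
`B(p,q) ≤ D(p‖q)/2`, and symmetrically `B(p,q) ≤ D(q‖p)/2`. Hence `B(p,q)` is at most half the
smaller divergence, which is at most half the harmonic mean `2 D(p‖q) D(q‖p) / (D(p‖q) + D(q‖p))`
of the two nonnegative divergences.
-/

open Finset Real

theorem Real.sum_mul_log_le_log_sum_mul {ι : Type*} (s : Finset ι) (w z : ι → ℝ)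
    (hw : ∀ i ∈ s, 0 ≤ w i) (hw₁ : ∑ i ∈ s, w i = 1) (hz : ∀ i ∈ s, 0 < z i) :
    ∑ i ∈ s, w i * log (z i) ≤ log (∑ i ∈ s, w i * z i) :=
  strictConcaveOn_log_Ioi.concaveOn.le_map_sum hw hw₁ hz

theorem min_div_two_le_mul_div_add {a b : ℝ} (ha : 0 ≤ a) (hb : 0 ≤ b) :
    min a b / 2 ≤ a * b / (a + b) := by
  rcases (add_nonneg ha hb).eq_or_lt with hab | hab
  · obtain ⟨rfl, rfl⟩ : a = 0 ∧ b = 0 := ⟨by linarith, by linarith⟩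
    simp
  rw [div_le_div_iff₀ two_pos hab]
  rcases le_total a b with h | h
  · rw [min_eq_left h]; nlinarith
  · rw [min_eq_right h]; nlinarith

section Divergences

variable {α : Type*} [Fintype α] {p q : α → ℝ}

theorem neg_log_sum_sqrt_mul_le_half_sum_mul_log_div (hp : ∀ x, 0 < p x) (hq : ∀ x, 0 < q x)
    (hps : ∑ x, p x = 1) :
    -log (∑ x, √(p x * q x)) ≤ (∑ x, p x * log (p x / q x)) / 2 := by
  have hz : ∀ x ∈ univ, 0 < √(q x / p x) := fun x _ => sqrt_pos.2 (div_pos (hq x) (hp x))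
  have jensen := sum_mul_log_le_log_sum_mul univ p (fun x => √(q x / p x))
    (fun x _ => (hp x).le) hps hz
  have hlhs : ∀ x, p x * log √(q x / p x) = -(p x * log (p x / q x)) / 2 := fun x => by
    rw [log_sqrt (div_pos (hq x) (hp x)).le, log_div (hq x).ne' (hp x).ne',
      log_div (hp x).ne' (hq x).ne']
    ring
  have hrhs : ∀ x, p x * √(q x / p x) = √(p x * q x) := fun x => by
    rw [sqrt_div' _ (hp x).le, sqrt_mul (hp x).le, mul_div_assoc', mul_comm, mul_div_assoc,
      div_sqrt, mul_comm]
  simp only [hlhs, hrhs, ← sum_div, sum_neg_distrib] at jensen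
  linarith

theorem sum_mul_log_div_nonneg (hp : ∀ x, 0 < p x) (hq : ∀ x, 0 < q x)
    (hps : ∑ x, p x = 1) (hqs : ∑ x, q x = 1) :
    0 ≤ ∑ x, p x * log (p x / q x) := by
  have jensen := sum_mul_log_le_log_sum_mul univ p (fun x => q x / p x)
    (fun x _ => (hp x).le) hps (fun x _ => div_pos (hq x) (hp x))
  have hlhs : ∀ x, p x * log (q x / p x) = -(p x * log (p x / q x)) := fun x => by
    rw [log_div (hq x).ne' (hp x).ne', log_div (hp x).ne' (hq x).ne']
    ring
  simp only [hlhs, mul_div_cancel₀ _ (hp _).ne', hqs, log_one, sum_neg_distrib] at jensen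
  linarith

end Divergences

theorem bhattacharyya_le_resistor_general
    {α : Type*} [Fintype α] (p q : α → ℝ)
    (hp : ∀ x, 0 < p x) (hq : ∀ x, 0 < q x)
    (hps : ∑ x, p x = 1) (hqs : ∑ x, q x = 1) :
    -Real.log (∑ x, Real.sqrt (p x * q x)) ≤
      (∑ x, p x * Real.log (p x / q x)) * (∑ x, q x * Real.log (q x / p x)) /
        ((∑ x, p x * Real.log (p x / q x)) + (∑ x, q x * Real.log (q x / p x))) := by
  have hBp := neg_log_sum_sqrt_mul_le_half_sum_mul_log_div hp hq hps
  have hBq := neg_log_sum_sqrt_mul_le_half_sum_mul_log_div hq hp hqs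
  simp only [mul_comm (q _) (p _)] at hBq
  calc -log (∑ x, √(p x * q x))
      ≤ min (∑ x, p x * log (p x / q x)) (∑ x, q x * log (q x / p x)) / 2 := by
        rw [← min_div_div_right two_pos.le]
        exact le_min hBp hBq
    _ ≤ _ := min_div_two_le_mul_div_add (sum_mul_log_div_nonneg hp hq hps hqs)
        (sum_mul_log_div_nonneg hq hp hqs hps)

theorem bhattacharyya_le_resistor
    {α : Type*} [Fintype α] (p q : α → ℝ)
    (hp : ∀ x, 0 < p x) (hq : ∀ x, 0 < q x)
    (hps : ∑ x, p x = 1) (hqs : ∑ x, q x = 1) (hpq : p ≠ q) :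
    -Real.log (∑ x, Real.sqrt (p x * q x)) ≤
      (∑ x, p x * Real.log (p x / q x)) * (∑ x, q x * Real.log (q x / p x)) /
        ((∑ x, p x * Real.log (p x / q x)) + (∑ x, q x * Real.log (q x / p x))) :=
  bhattacharyya_le_resistor_general p q hp hq hps hqs
end

section
/- For t ∈ (0,1) and p ≠ q, the Chernoff quantity -log Z(t) is strictly positive. -/
open Real Finset

lemma young_strict {a b t : ℝ} (ha : 0 < a) (hb : 0 < b) (ht0 : 0 < t) (ht1 : t < 1)
    (hab : a ≠ b) : a ^ t * b ^ (1 - t) < t * a + (1 - t) * b := by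
  have h1t : 0 < 1 - t := by linarith
  have hsum : (0:ℝ) < t * a + (1 - t) * b := by positivity
  have hlog : t • Real.log a + (1 - t) • Real.log b < Real.log (t • a + (1 - t) • b) :=
    strictConcaveOn_log_Ioi.2 ha hb hab ht0 h1t (by ring)
  have := Real.exp_lt_exp.2 hlog
  rw [Real.exp_log (by simpa using hsum)] at this
  calc a ^ t * b ^ (1 - t)
      = Real.exp (t • Real.log a + (1 - t) • Real.log b) := by
        rw [smul_eq_mul, smul_eq_mul, Real.exp_add, Real.rpow_def_of_pos ha,
          Real.rpow_def_of_pos hb, mul_comm (Real.log a), mul_comm (Real.log b)]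
    _ < _ := by simpa using this

lemma young_le {a b t : ℝ} (ha : 0 < a) (hb : 0 < b) (ht0 : 0 < t) (ht1 : t < 1) :
    a ^ t * b ^ (1 - t) ≤ t * a + (1 - t) * b := by
  rcases eq_or_ne a b with rfl | hab
  · rw [← Real.rpow_add ha]
    simp only [add_sub_cancel, Real.rpow_one]
    linarith [show t * a + (1 - t) * a = a by ring]
  · exact (young_strict ha hb ht0 ht1 hab).le

theorem chernoff_strict_pos
    {α : Type*} [Fintype α] (p q : α → ℝ)
    (hp : ∀ x, 0 < p x) (hq : ∀ x, 0 < q x)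
    (hps : ∑ x, p x = 1) (hqs : ∑ x, q x = 1) (hpq : p ≠ q)
    (t : ℝ) (ht0 : 0 < t) (ht1 : t < 1) :
    (∑ x, p x ^ t * q x ^ (1 - t)) < 1 ∧
      0 < -Real.log (∑ x, p x ^ t * q x ^ (1 - t)) := by
  obtain ⟨x₀, hx₀⟩ : ∃ x, p x ≠ q x := Function.ne_iff.mp hpq
  have hlt : (∑ x, p x ^ t * q x ^ (1 - t)) < ∑ x, (t * p x + (1 - t) * q x) := by
    refine Finset.sum_lt_sum (fun i _ => young_le (hp i) (hq i) ht0 ht1)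
      ⟨x₀, Finset.mem_univ _, young_strict (hp x₀) (hq x₀) ht0 ht1 hx₀⟩
  have hsum : ∑ x, (t * p x + (1 - t) * q x) = 1 := by
    rw [Finset.sum_add_distrib, ← Finset.mul_sum, ← Finset.mul_sum, hps, hqs]; ring
  have h1 : (∑ x, p x ^ t * q x ^ (1 - t)) < 1 := hlt.trans_eq hsum
  refine ⟨h1, ?_⟩
  have hne : (Finset.univ : Finset α).Nonempty := by
    rcases (Finset.univ : Finset α).eq_empty_or_nonempty with h | h
    · rw [h] at hps; simp at hps
    · exact h
  have hpos : 0 < ∑ x, p x ^ t * q x ^ (1 - t) :=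
    Finset.sum_pos (fun i _ => mul_pos (Real.rpow_pos_of_pos (hp i) _) (Real.rpow_pos_of_pos (hq i) _)) hne
  simpa using Real.log_neg hpos h1
end

section
/- The map t ↦ -log Z(t) is concave on [0,1] and vanishes at the endpoints t = 0 and t = 1. -/
/-!
Writing `Z(t) = ∑ₓ p(x)ᵗ q(x)¹⁻ᵗ`, Hölder's inequality with the conjugate exponents `1/a`, `1/b`
gives `Z(a s + b r) ≤ Z(s)ᵃ Z(r)ᵇ` whenever `a + b = 1`, so `log Z` is convex and `-log Z` is
concave.
-/

open Finset Real

theorem Real.sum_rpow_mul_rpow_le_of_nonneg {ι : Type*} (s : Finset ι) {f g : ι → ℝ}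
    (hf : ∀ i ∈ s, 0 ≤ f i) (hg : ∀ i ∈ s, 0 ≤ g i) {a b : ℝ} (ha : 0 < a) (hb : 0 < b)
    (hab : a + b = 1) :
    ∑ i ∈ s, f i ^ a * g i ^ b ≤ (∑ i ∈ s, f i) ^ a * (∑ i ∈ s, g i) ^ b := by
  have holder := inner_le_Lp_mul_Lq_of_nonneg s (HolderConjugate.inv_inv ha hb hab)
    (fun i hi => rpow_nonneg (hf i hi) a) (fun i hi => rpow_nonneg (hg i hi) b)
  rwa [sum_congr rfl fun i hi => rpow_rpow_inv (hf i hi) ha.ne',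
    sum_congr rfl fun i hi => rpow_rpow_inv (hg i hi) hb.ne', one_div, one_div, inv_inv,
    inv_inv] at holder

theorem Real.rpow_mul_rpow_one_sub_add {u v : ℝ} (hu : 0 < u) (hv : 0 < v) {s r a b : ℝ}
    (hab : a + b = 1) :
    u ^ (a * s + b * r) * v ^ (1 - (a * s + b * r)) =
      (u ^ s * v ^ (1 - s)) ^ a * (u ^ r * v ^ (1 - r)) ^ b := by
  rw [mul_rpow (rpow_nonneg hu.le _) (rpow_nonneg hv.le _),
    mul_rpow (rpow_nonneg hu.le _) (rpow_nonneg hv.le _), mul_mul_mul_comm,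
    ← rpow_mul hu.le, ← rpow_mul hu.le, ← rpow_add hu, ← rpow_mul hv.le, ← rpow_mul hv.le,
    ← rpow_add hv]
  congr 2
  · ring
  · linear_combination -hab

theorem Real.convexOn_log_sum_rpow_mul_rpow_one_sub {ι : Type*} (S : Finset ι) {u v : ι → ℝ}
    (hu : ∀ i ∈ S, 0 < u i) (hv : ∀ i ∈ S, 0 < v i) :
    ConvexOn ℝ Set.univ fun t : ℝ => log (∑ i ∈ S, u i ^ t * v i ^ (1 - t)) := by
  rcases S.eq_empty_or_nonempty with rfl | hS
  · simpa using convexOn_const (0 : ℝ) convex_univ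
  have hterm_pos : ∀ t : ℝ, ∀ i ∈ S, 0 < u i ^ t * v i ^ (1 - t) := fun t i hi =>
    mul_pos (rpow_pos_of_pos (hu i hi) t) (rpow_pos_of_pos (hv i hi) _)
  set Z : ℝ → ℝ := fun t => ∑ i ∈ S, u i ^ t * v i ^ (1 - t)
  have hZ_pos (t : ℝ) : 0 < Z t := sum_pos (hterm_pos t) hS
  refine convexOn_iff_forall_pos.mpr ⟨convex_univ, fun s _ r _ a b ha hb hab => ?_⟩
  have hZ_le : Z (a * s + b * r) ≤ Z s ^ a * Z r ^ b := by
    simp only [Z, sum_congr rfl fun i hi => rpow_mul_rpow_one_sub_add (hu i hi) (hv i hi) hab]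
    exact sum_rpow_mul_rpow_le_of_nonneg S (fun i hi => (hterm_pos s i hi).le)
      (fun i hi => (hterm_pos r i hi).le) ha hb hab
  calc log (Z (a * s + b * r))
      ≤ log (Z s ^ a * Z r ^ b) := log_le_log (hZ_pos _) hZ_le
    _ = a * log (Z s) + b * log (Z r) := by
        rw [log_mul (rpow_pos_of_pos (hZ_pos s) a).ne' (rpow_pos_of_pos (hZ_pos r) b).ne',
          log_rpow (hZ_pos s), log_rpow (hZ_pos r)]

theorem neg_log_Z_concave_and_endpoints
    {α : Type*} [Fintype α] (p q : α → ℝ)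
    (hp : ∀ x, 0 < p x) (hq : ∀ x, 0 < q x)
    (hps : ∑ x, p x = 1) (hqs : ∑ x, q x = 1) :
    (∑ x, p x ^ (0 : ℝ) * q x ^ (1 - (0 : ℝ))) = 1 ∧
    (∑ x, p x ^ (1 : ℝ) * q x ^ (1 - (1 : ℝ))) = 1 ∧
    ConcaveOn ℝ (Set.Icc (0 : ℝ) 1)
      (fun t : ℝ => -Real.log (∑ x, p x ^ t * q x ^ (1 - t))) := by
  refine ⟨by simp [hqs], by simp [hps], ?_⟩
  have hconvex :=
    convexOn_log_sum_rpow_mul_rpow_one_sub univ (fun x _ => hp x) (fun x _ => hq x)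
  exact (hconvex.subset (Set.subset_univ _) (convex_Icc 0 1)).neg
end
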